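/- arXiv:2007.10386 — 2 statements merged into one kernel-verified Lean document; each statement's English description precedes it below -/
import Mathlib

section
/- Let |ξ| < π/2 and 0 ≤ γ < 1. If f(z) = z + Σ_{n=2}^∞ a_n z^n belongs to 𝒜 and its coefficients satisfy Σ_{n=2}^∞ n [ (n-1) sec ξ + (1-γ) ] |a_n| ≤ 1 - γ, then f belongs to the class 𝒦(ξ, γ). -/
noncomputable section

open Complex Real Set

/-- The open unit disk in the complex plane. -/
def unitDisk : Set ℂ := Metric.ball 0 1

/-- The class 𝒜 of normalized analytic functions on the unit disk:
`f` analytic on `𝔻`, `f 0 = 0`, `f' 0 = 1`. -/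
def NormalizedAnalytic (f : ℂ → ℂ) : Prop :=
  AnalyticOn ℂ f unitDisk ∧ f 0 = 0 ∧ deriv f 0 = 1

/-- The spirallike class `𝒮(ξ, γ, ρ)`. -/
def SpiralS (ξ γ ρ : ℝ) (f : ℂ → ℂ) : Prop :=
  NormalizedAnalytic f ∧ Set.InjOn f unitDisk ∧
    ∀ z ∈ unitDisk, z ≠ 0 →
      (1 - (ρ : ℂ)) * f z + (ρ : ℂ) * z * deriv f z ≠ 0 ∧
      γ * Real.cos ξ <
        (Complex.exp (Complex.I * ξ) * (z * deriv f z) /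
          ((1 - (ρ : ℂ)) * f z + (ρ : ℂ) * z * deriv f z)).re

/-- The convex spirallike class `𝒦(ξ, γ, ρ)`. -/
def SpiralK (ξ γ ρ : ℝ) (f : ℂ → ℂ) : Prop :=
  NormalizedAnalytic f ∧ Set.InjOn f unitDisk ∧
    ∀ z ∈ unitDisk,
      deriv f z + (ρ : ℂ) * z * deriv (deriv f) z ≠ 0 ∧
      γ * Real.cos ξ <
        (Complex.exp (Complex.I * ξ) * (z * deriv (deriv f) z + deriv f z) /
          (deriv f z + (ρ : ℂ) * z * deriv (deriv f) z)).re

/-- The spirallike class `𝒮(ξ, γ)`. -/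
def SpiralS0 (ξ γ : ℝ) (f : ℂ → ℂ) : Prop :=
  NormalizedAnalytic f ∧ Set.InjOn f unitDisk ∧
    ∀ z ∈ unitDisk, z ≠ 0 →
      f z ≠ 0 ∧
      γ * Real.cos ξ <
        (Complex.exp (Complex.I * ξ) * (z * deriv f z) / f z).re

/-- The convex spirallike class `𝒦(ξ, γ)`. -/
def SpiralK0 (ξ γ : ℝ) (f : ℂ → ℂ) : Prop :=
  NormalizedAnalytic f ∧ Set.InjOn f unitDisk ∧
    ∀ z ∈ unitDisk,
      deriv f z ≠ 0 ∧
      γ * Real.cos ξ <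
        (Complex.exp (Complex.I * ξ) *
          (1 + z * deriv (deriv f) z / deriv f z)).re

/-- The class `ℛ^τ(ϑ, δ)`. -/
def ClassR (τ : ℂ) (ϑ δ : ℝ) (f : ℂ → ℂ) : Prop :=
  NormalizedAnalytic f ∧ Set.InjOn f unitDisk ∧
    ∀ z ∈ unitDisk,
      ‖(((1 - (ϑ : ℂ)) * (if z = 0 then 1 else f z / z) + (ϑ : ℂ) * deriv f z - 1) /
          (2 * τ * (1 - (δ : ℂ)) +
            (1 - (ϑ : ℂ)) * (if z = 0 then 1 else f z / z) + (ϑ : ℂ) * deriv f z - 1))‖ < 1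

/-- The Pascal distribution series
`Θ_q^m(z) = z + ∑_{n=2}^∞ C(n+m-2, m-1) q^(n-1) (1-q)^m z^n`. -/
def pascalTheta (m : ℕ) (q : ℝ) : ℂ → ℂ := fun z =>
  z + ∑' n : ℕ, ((n + m).choose (m - 1) : ℂ) * (q : ℂ) ^ (n + 1) * (1 - (q : ℂ)) ^ m * z ^ (n + 2)

/-- The integral operator `𝒢_q^m(z) = ∫_0^z Θ_q^m(t)/t dt
= z + ∑_{n=2}^∞ C(n+m-2, m-1) q^(n-1) (1-q)^m z^n / n`. -/
def pascalG (m : ℕ) (q : ℝ) : ℂ → ℂ := fun z =>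
  z + ∑' n : ℕ, ((n + m).choose (m - 1) : ℂ) * (q : ℂ) ^ (n + 1) * (1 - (q : ℂ)) ^ m *
    z ^ (n + 2) / ((n : ℂ) + 2)

/-! With `A = ∑ n |aₙ|` and `B = ∑ n (n - 1) |aₙ|`, the hypothesis reads
`B sec ξ + (1 - γ) A ≤ 1 - γ`, so `A ≤ 1` and `B ≤ (1 - γ) cos ξ (1 - A)`.
Differentiating the series termwise gives `|f' z - 1| ≤ |z| A ≤ |z|` and `|f'' z| ≤ B`.
The first bound makes `f - id` a contraction on every closed subdisk, so `f` is univalent,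
and gives `|f' z| ≥ 1 - |z| A > 0`. Hence `t = z f''/f'` satisfies
`|t| ≤ |z| B / (1 - |z| A) < (1 - γ) cos ξ`, and
`Re (e^{iξ} (1 + t)) ≥ cos ξ - |t| > γ cos ξ`. -/

theorem mem_unitDisk_iff {z : ℂ} : z ∈ unitDisk ↔ ‖z‖ < 1 := mem_ball_zero_iff

section PowerSeries

variable {b : ℕ → ℂ} {k : ℕ}

theorem norm_tsum_mul_pow_le (hb : Summable fun n => ‖b n‖) {z : ℂ} (hz : ‖z‖ ≤ 1) :
    ‖∑' n, b n * z ^ (n + k)‖ ≤ ‖z‖ ^ k * ∑' n, ‖b n‖ := by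
  refine tsum_of_norm_bounded (hb.hasSum.mul_left _) fun n => ?_
  calc ‖b n * z ^ (n + k)‖ = ‖z‖ ^ n * (‖z‖ ^ k * ‖b n‖) := by rw [norm_mul, norm_pow]; ring
    _ ≤ ‖z‖ ^ k * ‖b n‖ := mul_le_of_le_one_left (by positivity) (pow_le_one₀ (norm_nonneg z) hz)

theorem hasDerivAt_tsum_mul_pow_succ (hb : Summable fun n => ‖((n + k + 1 : ℕ) : ℂ) * b n‖)
    {z : ℂ} (hz : z ∈ unitDisk) :
    HasDerivAt (fun y => ∑' n, b n * y ^ (n + k + 1))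
      (∑' n, ((n + k + 1 : ℕ) : ℂ) * b n * z ^ (n + k)) z := by
  refine hasDerivAt_tsum_of_isPreconnected
    (g' := fun n y => ((n + k + 1 : ℕ) : ℂ) * b n * y ^ (n + k)) hb Metric.isOpen_ball
    (convex_ball (0 : ℂ) 1).isPreconnected (fun n y _ => ?_) (fun n y hy => ?_)
    (Metric.mem_ball_self one_pos) ?_ hz
  · simpa [mul_assoc, mul_comm, mul_left_comm] using (hasDerivAt_pow (n + k + 1) y).const_mul (b n)
  · rw [norm_mul (_ * _), norm_pow]
    exact mul_le_of_le_one_right (norm_nonneg _)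
      (pow_le_one₀ (norm_nonneg y) (mem_unitDisk_iff.mp hy).le)
  · simp

end PowerSeries

theorem Convex.injOn_of_norm_deriv_sub_one_le {𝕜 : Type*} [RCLike 𝕜] {f f' : 𝕜 → 𝕜}
    {s : Set 𝕜} {r : ℝ} (hs : Convex ℝ s) (hf : ∀ x ∈ s, HasDerivWithinAt f (f' x) s x)
    (hbound : ∀ x ∈ s, ‖f' x - 1‖ ≤ r) (hr : r < 1) : InjOn f s := by
  intro x hx y hy hxy
  have hlip := hs.norm_image_sub_le_of_norm_hasDerivWithin_le (f := fun t => f t - t)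
    (fun t ht => (hf t ht).sub (hasDerivWithinAt_id t s)) hbound hx hy
  rw [hxy, sub_sub_sub_cancel_left, ← norm_neg, neg_sub] at hlip
  have : ‖y - x‖ = 0 := by nlinarith [norm_nonneg (y - x)]
  exact (sub_eq_zero.mp (norm_eq_zero.mp this)).symm

theorem injOn_unitDisk_of_norm_deriv_sub_one_le {f : ℂ → ℂ}
    (hf : ∀ x ∈ unitDisk, DifferentiableAt ℂ f x)
    (hbound : ∀ x ∈ unitDisk, ‖deriv f x - 1‖ ≤ ‖x‖) :
    InjOn f unitDisk := by
  intro z hz y hy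
  set r := max ‖z‖ ‖y‖
  have hsub : Metric.closedBall 0 r ⊆ unitDisk :=
    Metric.closedBall_subset_ball (max_lt (mem_unitDisk_iff.mp hz) (mem_unitDisk_iff.mp hy))
  refine (convex_closedBall (0 : ℂ) r).injOn_of_norm_deriv_sub_one_le
    (fun x hx => (hf x (hsub hx)).hasDerivAt.hasDerivWithinAt)
    (fun x hx => (hbound x (hsub hx)).trans (mem_closedBall_zero_iff.mp hx))
    (max_lt (mem_unitDisk_iff.mp hz) (mem_unitDisk_iff.mp hy))
    (mem_closedBall_zero_iff.mpr (le_max_left _ _)) (mem_closedBall_zero_iff.mpr (le_max_right _ _))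

theorem cos_sub_norm_le_re_exp_mul_one_add (ξ : ℝ) (t : ℂ) :
    Real.cos ξ - ‖t‖ ≤ (Complex.exp (Complex.I * ξ) * (1 + t)).re := by
  rw [mul_comm Complex.I, mul_add, mul_one, Complex.add_re, Complex.exp_ofReal_mul_I_re]
  have hnorm : ‖Complex.exp (ξ * Complex.I) * t‖ = ‖t‖ := by
    rw [norm_mul, Complex.norm_exp_ofReal_mul_I, one_mul]
  have := (abs_le.mp ((Complex.abs_re_le_norm _).trans_eq hnorm)).1
  linarith

theorem norm_mul_div_lt_of_le {z p q : ℂ} {A B k : ℝ} (hz : ‖z‖ < 1) (hA : A ≤ 1) (hk : 0 < k)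
    (hB : B ≤ k * (1 - A)) (hp : 1 - ‖z‖ * A ≤ ‖p‖) (hq : ‖q‖ ≤ B) : ‖z * q / p‖ < k := by
  have hzA : ‖z‖ * A ≤ ‖z‖ := mul_le_of_le_one_right (norm_nonneg z) hA
  rw [norm_div, norm_mul, div_lt_iff₀ (by linarith)]
  calc ‖z‖ * ‖q‖ ≤ ‖z‖ * (k * (1 - A)) := by gcongr; exact hq.trans hB
    _ < k * (1 - ‖z‖ * A) := by nlinarith
    _ ≤ k * ‖p‖ := by gcongr

theorem le_mul_one_sub_of_mul_inv_add_le {A B c γ : ℝ} (hc : 0 < c)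
    (h : B * c⁻¹ + (1 - γ) * A ≤ 1 - γ) : B ≤ (1 - γ) * c * (1 - A) := by
  have : B * c⁻¹ ≤ (1 - γ) * (1 - A) := by linarith
  rwa [mul_inv_le_iff₀ hc, mul_right_comm] at this

def coeffDeriv (a : ℕ → ℂ) (n : ℕ) : ℂ := ((n + 2 : ℕ) : ℂ) * a (n + 2)

def coeffDeriv2 (a : ℕ → ℂ) (n : ℕ) : ℂ := ((n + 1 : ℕ) : ℂ) * coeffDeriv a n

section CoefficientCondition

variable {f : ℂ → ℂ} {a : ℕ → ℂ}

theorem norm_coeffDeriv_le_norm_coeffDeriv2 (n : ℕ) : ‖coeffDeriv a n‖ ≤ ‖coeffDeriv2 a n‖ := by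
  rw [coeffDeriv2, norm_mul, Complex.norm_natCast]
  exact le_mul_of_one_le_left (norm_nonneg _) (by norm_cast; omega)

theorem summable_coeffDeriv2_and_weighted_tsum_le {c γ : ℝ} (hc : 0 < c) (hγ : γ ≤ 1)
    (hs : Summable fun n : ℕ => ((n : ℝ) + 2) * (((n : ℝ) + 1) * c⁻¹ + (1 - γ)) * ‖a (n + 2)‖)
    (hle : ∑' n : ℕ, ((n : ℝ) + 2) * (((n : ℝ) + 1) * c⁻¹ + (1 - γ)) * ‖a (n + 2)‖ ≤ 1 - γ) :
    Summable (fun n => ‖coeffDeriv2 a n‖) ∧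
      (∑' n, ‖coeffDeriv2 a n‖) * c⁻¹ + (1 - γ) * ∑' n, ‖coeffDeriv a n‖ ≤ 1 - γ := by
  have hweight : ∀ n : ℕ, ((n : ℝ) + 2) * (((n : ℝ) + 1) * c⁻¹ + (1 - γ)) * ‖a (n + 2)‖ =
      ‖coeffDeriv2 a n‖ * c⁻¹ + (1 - γ) * ‖coeffDeriv a n‖ := by
    intro n
    simp only [coeffDeriv2, coeffDeriv, norm_mul, Complex.norm_natCast]
    push_cast
    ring
  simp only [hweight] at hs hle
  have h2 : Summable fun n => ‖coeffDeriv2 a n‖ := by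
    refine (hs.mul_left c).of_nonneg_of_le (fun n => norm_nonneg _) fun n => ?_
    have : 0 ≤ (1 - γ) * ‖coeffDeriv a n‖ := mul_nonneg (sub_nonneg.mpr hγ) (norm_nonneg _)
    rw [mul_add, ← mul_assoc, mul_comm c, mul_assoc, mul_inv_cancel₀ hc.ne', mul_one]
    nlinarith
  have h1 : Summable fun n => ‖coeffDeriv a n‖ :=
    h2.of_nonneg_of_le (fun n => norm_nonneg _) norm_coeffDeriv_le_norm_coeffDeriv2
  refine ⟨h2, ?_⟩
  rwa [(h2.mul_right _).tsum_add (h1.mul_left _), tsum_mul_right, tsum_mul_left] at hle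

variable (hrep : ∀ z ∈ unitDisk, HasSum (fun n : ℕ => a (n + 2) * z ^ (n + 2)) (f z - z))
include hrep

theorem apply_zero_of_hasSum : f 0 = 0 := by
  simpa using (hrep 0 (Metric.mem_ball_self one_pos)).unique (by simp)

variable (ha : Summable fun n => ‖coeffDeriv2 a n‖)
include ha

theorem hasDerivAt_of_hasSum {z : ℂ} (hz : z ∈ unitDisk) :
    HasDerivAt f (1 + ∑' n, coeffDeriv a n * z ^ (n + 1)) z := by
  have htail := hasDerivAt_tsum_mul_pow_succ (k := 1) (b := fun n => a (n + 2))
    (ha.of_nonneg_of_le (fun n => norm_nonneg _) norm_coeffDeriv_le_norm_coeffDeriv2) hz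
  refine ((hasDerivAt_id z).add htail).congr_of_eventuallyEq ?_
  filter_upwards [Metric.isOpen_ball.mem_nhds hz] with y hy
  rw [show f y = y + (f y - y) by ring, ← (hrep y hy).tsum_eq]
  rfl

theorem hasDerivAt_deriv_of_hasSum {z : ℂ} (hz : z ∈ unitDisk) :
    HasDerivAt (deriv f) (∑' n, coeffDeriv2 a n * z ^ n) z := by
  refine ((hasDerivAt_tsum_mul_pow_succ (k := 0) ha hz).const_add 1).congr_of_eventuallyEq ?_
  filter_upwards [Metric.isOpen_ball.mem_nhds hz] with y hy
  exact (hasDerivAt_of_hasSum hrep ha hy).deriv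

theorem norm_deriv_sub_one_le {z : ℂ} (hz : z ∈ unitDisk) :
    ‖deriv f z - 1‖ ≤ ‖z‖ * ∑' n, ‖coeffDeriv a n‖ := by
  rw [(hasDerivAt_of_hasSum hrep ha hz).deriv, add_sub_cancel_left]
  simpa using norm_tsum_mul_pow_le (k := 1)
    (ha.of_nonneg_of_le (fun n => norm_nonneg _) norm_coeffDeriv_le_norm_coeffDeriv2)
    (mem_unitDisk_iff.mp hz).le

theorem one_sub_mul_le_norm_deriv {z : ℂ} (hz : z ∈ unitDisk) :
    1 - ‖z‖ * ∑' n, ‖coeffDeriv a n‖ ≤ ‖deriv f z‖ := by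
  have := norm_sub_norm_le (1 : ℂ) (1 - deriv f z)
  rw [sub_sub_cancel, norm_one, ← norm_neg, neg_sub] at this
  linarith [norm_deriv_sub_one_le hrep ha hz]

theorem norm_deriv_deriv_le {z : ℂ} (hz : z ∈ unitDisk) :
    ‖deriv (deriv f) z‖ ≤ ∑' n, ‖coeffDeriv2 a n‖ := by
  rw [(hasDerivAt_deriv_of_hasSum hrep ha hz).deriv]
  simpa using norm_tsum_mul_pow_le (k := 0) ha (mem_unitDisk_iff.mp hz).le

end CoefficientCondition

theorem stmt3_general (ξ γ : ℝ) (hξ : |ξ| < π / 2) (hγ1 : γ < 1)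
    (f : ℂ → ℂ) (a : ℕ → ℂ)
    (hf : AnalyticOn ℂ f unitDisk)
    (hrep : ∀ z ∈ unitDisk, HasSum (fun n : ℕ => a (n + 2) * z ^ (n + 2)) (f z - z))
    (hsummable : Summable (fun n : ℕ =>
      ((n : ℝ) + 2) * (((n : ℝ) + 1) * (Real.cos ξ)⁻¹ + (1 - γ)) * ‖a (n + 2)‖))
    (hle : ∑' n : ℕ,
      ((n : ℝ) + 2) * (((n : ℝ) + 1) * (Real.cos ξ)⁻¹ + (1 - γ)) * ‖a (n + 2)‖
        ≤ 1 - γ) :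
    SpiralK0 ξ γ f := by
  have hc : 0 < Real.cos ξ := Real.cos_pos_of_mem_Ioo (abs_lt.mp hξ)
  obtain ⟨ha, hsum⟩ := summable_coeffDeriv2_and_weighted_tsum_le hc hγ1.le hsummable hle
  have hk : 0 < (1 - γ) * Real.cos ξ := mul_pos (sub_pos.mpr hγ1) hc
  have hBA := le_mul_one_sub_of_mul_inv_add_le hc hsum
  have hA : ∑' n, ‖coeffDeriv a n‖ ≤ 1 := by
    have hB : 0 ≤ ∑' n, ‖coeffDeriv2 a n‖ := tsum_nonneg fun n => norm_nonneg _
    nlinarith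
  have hzA : ∀ z ∈ unitDisk, ‖z‖ * ∑' n, ‖coeffDeriv a n‖ ≤ ‖z‖ := fun z _ =>
    mul_le_of_le_one_right (norm_nonneg z) hA
  refine ⟨⟨hf, apply_zero_of_hasSum hrep, ?_⟩, ?_, fun z hz => ⟨?_, ?_⟩⟩
  · simpa [sub_eq_zero] using norm_deriv_sub_one_le hrep ha (Metric.mem_ball_self one_pos)
  · exact injOn_unitDisk_of_norm_deriv_sub_one_le
      (fun x hx => (hasDerivAt_of_hasSum hrep ha hx).differentiableAt)
      (fun x hx => (norm_deriv_sub_one_le hrep ha hx).trans (hzA x hx))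
  · refine norm_pos_iff.mp (lt_of_lt_of_le ?_ (one_sub_mul_le_norm_deriv hrep ha hz))
    linarith [hzA z hz, mem_unitDisk_iff.mp hz]
  · have ht := norm_mul_div_lt_of_le (mem_unitDisk_iff.mp hz) hA hk hBA
      (one_sub_mul_le_norm_deriv hrep ha hz) (norm_deriv_deriv_le hrep ha hz)
    linarith [cos_sub_norm_le_re_exp_mul_one_add ξ (z * deriv (deriv f) z / deriv f z)]

/-- sufficient coefficient condition for membership in `𝒦(ξ, γ)`. -/
theorem stmt3 (ξ γ : ℝ) (hξ : |ξ| < π / 2) (hγ0 : 0 ≤ γ) (hγ1 : γ < 1)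
    (f : ℂ → ℂ) (a : ℕ → ℂ)
    (hf : AnalyticOn ℂ f unitDisk)
    (hrep : ∀ z ∈ unitDisk, HasSum (fun n : ℕ => a (n + 2) * z ^ (n + 2)) (f z - z))
    (hsummable : Summable (fun n : ℕ =>
      ((n : ℝ) + 2) * (((n : ℝ) + 1) * (Real.cos ξ)⁻¹ + (1 - γ)) * ‖a (n + 2)‖))
    (hle : ∑' n : ℕ,
      ((n : ℝ) + 2) * (((n : ℝ) + 1) * (Real.cos ξ)⁻¹ + (1 - γ)) * ‖a (n + 2)‖
        ≤ 1 - γ) :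
    SpiralK0 ξ γ f :=
  stmt3_general ξ γ hξ hγ1 f a hf hrep hsummable hle
end
end

section
/- Let m ≥ 1 be an integer, 0 < q < 1, |ξ| < π/2, 0 ≤ ρ < 1 and 0 ≤ γ < 1. If [ (1-ρ) sec ξ + ρ(1-γ) ] · q m / (1-q)^{m+1} ≤ 1 - γ, then the Pascal distribution series Θ_q^m belongs to the class 𝒮(ξ, γ, ρ). -/
noncomputable section

open Complex Real Set

/-!
Write `Θ_q^m(z) = z + ∑ aₙ z^(n+2)` with `aₙ ≥ 0`. By the negative binomial series,
`S₀ = ∑ aₙ = 1 - (1-q)^m` and `S₁ = ∑ (n+1) aₙ = qm/(1-q)`. For `f = z + ∑ aₙ z^(n+2)`, the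
denominator `D = (1-ρ) f + ρ z f'` and the numerator `N = z f'` satisfy
`‖D - z‖ ≤ (S₀ + ρ S₁) |z|²` and `‖N - D‖ = (1-ρ) ‖∑ (n+1) aₙ z^(n+2)‖ ≤ (1-ρ) S₁ |z|²`.
Multiplied by `cos ξ (1-q)^m`, the hypothesis reads
`(1-ρ) S₁ + (1-γ) cos ξ (S₀ + ρ S₁) ≤ (1-γ) cos ξ`, which forces `‖N/D - 1‖ < (1-γ) cos ξ` and hence `Re (e^{iξ} N/D) > γ cos ξ`. The same inequality
gives `∑ (n+2) aₙ ≤ 1`, so on each disk `|z| ≤ r < 1` the tail `∑ aₙ z^(n+2)` is `r`-Lipschitz,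
and `f` is injective.
-/

section PowerSeriesTail

variable {a b : ℕ → ℂ}

lemma summable_mul_pow_add (hb : Summable fun n => ‖b n‖) {z : ℂ} (hz : ‖z‖ ≤ 1) (k : ℕ) :
    Summable fun n => b n * z ^ (n + k) :=
  Summable.of_norm_bounded hb fun n => by
    rw [norm_mul, norm_pow]
    exact mul_le_of_le_one_right (norm_nonneg _) (pow_le_one₀ (norm_nonneg z) hz)

lemma norm_tsum_mul_pow_add_le {B : ℝ} (hb : HasSum (fun n => ‖b n‖) B) {z : ℂ} (hz : ‖z‖ ≤ 1)
    (k : ℕ) : ‖∑' n, b n * z ^ (n + k)‖ ≤ B * ‖z‖ ^ k :=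
  tsum_of_norm_bounded (hb.mul_right _) fun n => by
    rw [norm_mul, norm_pow]
    exact mul_le_mul_of_nonneg_left (pow_le_pow_of_le_one (norm_nonneg z) hz (by omega))
      (norm_nonneg _)

lemma hasDerivAt_tsum_mul_pow_add_two (ha : Summable fun n : ℕ => ((n : ℝ) + 2) * ‖a n‖) {z : ℂ}
    (hz : ‖z‖ < 1) :
    HasDerivAt (fun w => ∑' n, a n * w ^ (n + 2))
      (∑' n : ℕ, ((n : ℂ) + 2) * a n * z ^ (n + 1)) z := by
  refine hasDerivAt_tsum_of_isPreconnected (g := fun n w => a n * w ^ (n + 2))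
    (g' := fun n w => ((n : ℂ) + 2) * a n * w ^ (n + 1)) ha Metric.isOpen_ball
    (convex_ball (0 : ℂ) 1).isPreconnected (fun n w _ => ?_) (fun n w hw => ?_)
    (Metric.mem_ball_self one_pos) ?_ (mem_ball_zero_iff.mpr hz)
  · exact ((hasDerivAt_pow (n + 2) w).const_mul (a n)).congr_deriv (by push_cast; ring)
  · rw [norm_mul, norm_mul, norm_pow, show ‖(n : ℂ) + 2‖ = n + 2 by norm_cast]
    exact mul_le_of_le_one_right (by positivity)
      (pow_le_one₀ (norm_nonneg w) (mem_ball_zero_iff.mp hw).le)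
  · simp

lemma injOn_add_tsum_mul_pow_add_two {S : ℝ} (ha : HasSum (fun n : ℕ => ((n : ℝ) + 2) * ‖a n‖) S)
    (hS : S ≤ 1) : InjOn (fun z => z + ∑' n, a n * z ^ (n + 2)) (Metric.ball 0 1) := by
  intro z₁ hz₁ z₂ hz₂ heq
  rw [mem_ball_zero_iff] at hz₁ hz₂
  set r := max ‖z₁‖ ‖z₂‖
  have hr : r < 1 := max_lt hz₁ hz₂
  have hnorm : HasSum (fun n : ℕ => ‖((n : ℂ) + 2) * a n‖) S := by
    convert ha using 2 with n
    rw [norm_mul]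
    norm_cast
  have hderiv : ∀ w ∈ Metric.closedBall (0 : ℂ) r, HasDerivWithinAt
      (fun w => ∑' n, a n * w ^ (n + 2)) (∑' n : ℕ, ((n : ℂ) + 2) * a n * w ^ (n + 1))
      (Metric.closedBall 0 r) w := fun w hw =>
    (hasDerivAt_tsum_mul_pow_add_two ha.summable
      ((mem_closedBall_zero_iff.mp hw).trans_lt hr)).hasDerivWithinAt
  have hbound : ∀ w ∈ Metric.closedBall (0 : ℂ) r,
      ‖∑' n : ℕ, ((n : ℂ) + 2) * a n * w ^ (n + 1)‖ ≤ r := fun w hw => by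
    have hw : ‖w‖ ≤ r := mem_closedBall_zero_iff.mp hw
    calc _ ≤ S * ‖w‖ ^ 1 := norm_tsum_mul_pow_add_le hnorm (hw.trans hr.le) 1
      _ ≤ 1 * r := by rw [pow_one]; exact mul_le_mul hS hw (norm_nonneg w) zero_le_one
      _ = r := one_mul r
  have hlip := (convex_closedBall (0 : ℂ) r).norm_image_sub_le_of_norm_hasDerivWithin_le hderiv
    hbound (mem_closedBall_zero_iff.mpr (le_max_left _ _))
    (mem_closedBall_zero_iff.mpr (le_max_right _ _))
  rw [show ∑' n, a n * z₂ ^ (n + 2) - ∑' n, a n * z₁ ^ (n + 2) = -(z₂ - z₁) by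
    simp only at heq; linear_combination -heq, norm_neg] at hlip
  have : ‖z₂ - z₁‖ = 0 := by nlinarith [norm_nonneg (z₂ - z₁)]
  exact (sub_eq_zero.mp (norm_eq_zero.mp this)).symm

end PowerSeriesTail

lemma norm_sub_lt_mul_norm_of_sq_bounds {z D N : ℂ} {A B c : ℝ} (hz₀ : z ≠ 0) (hz : ‖z‖ < 1)
    (hc : 0 < c) (hD : ‖D - z‖ ≤ A * ‖z‖ ^ 2) (hN : ‖N - D‖ ≤ B * ‖z‖ ^ 2) (hAB : B + c * A ≤ c) :
    ‖N - D‖ < c * ‖D‖ := by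
  have hz₀' : 0 < ‖z‖ := norm_pos_iff.mpr hz₀
  have hB : 0 ≤ B := nonneg_of_mul_nonneg_left ((norm_nonneg _).trans hN) (by positivity)
  have hDz : ‖z‖ - A * ‖z‖ ^ 2 ≤ ‖D‖ := by
    have := norm_sub_norm_le z (z - D)
    rw [sub_sub_cancel, norm_sub_rev] at this
    linarith
  nlinarith [mul_pos (mul_pos hc hz₀') (sub_pos.mpr hz), mul_le_mul_of_nonneg_left hDz hc.le]

lemma Complex.lt_re_exp_mul_div {ξ γ : ℝ} {N D : ℂ} (h : ‖N - D‖ < (1 - γ) * Real.cos ξ * ‖D‖) :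
    γ * Real.cos ξ < (exp (I * ξ) * N / D).re := by
  have hD : D ≠ 0 := by
    rintro rfl
    simp only [norm_zero, mul_zero] at h
    exact (norm_nonneg _).not_gt h
  have hsplit : exp (I * ξ) * N / D = exp (I * ξ) + exp (I * ξ) * ((N - D) / D) := by
    field_simp
    ring
  have hsmall : ‖exp (I * ξ) * ((N - D) / D)‖ < (1 - γ) * Real.cos ξ := by
    rw [norm_mul, mul_comm I, norm_exp_ofReal_mul_I, one_mul, norm_div]
    exact (div_lt_iff₀ (norm_pos_iff.mpr hD)).mpr h
  have hre : (exp (I * ξ)).re = Real.cos ξ := by rw [mul_comm, exp_ofReal_mul_I_re]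
  rw [hsplit, add_re, hre]
  linarith [neg_le_of_abs_le (abs_re_le_norm (exp (I * ξ) * ((N - D) / D)))]

section SufficientCondition

variable {a : ℕ → ℂ}

lemma mul_tsum_deriv_sub_tsum (ha : Summable fun n : ℕ => ((n : ℝ) + 2) * ‖a n‖) {z : ℂ}
    (hz : ‖z‖ ≤ 1) :
    z * ∑' n : ℕ, ((n : ℂ) + 2) * a n * z ^ (n + 1) - ∑' n, a n * z ^ (n + 2) =
      ∑' n : ℕ, ((n : ℂ) + 1) * a n * z ^ (n + 2) := by
  have hnorm : Summable fun n : ℕ => ‖((n : ℂ) + 2) * a n‖ := by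
    convert ha using 2 with n
    rw [norm_mul]
    norm_cast
  have hnorm' : Summable fun n => ‖a n‖ :=
    ha.of_nonneg_of_le (fun _ => norm_nonneg _) fun n => le_mul_of_one_le_left (norm_nonneg _)
      (by linarith [n.cast_nonneg (α := ℝ)])
  rw [← tsum_mul_left, ← (summable_mul_pow_add hnorm hz 1).mul_left z |>.tsum_sub
    (summable_mul_pow_add hnorm' hz 2)]
  exact tsum_congr fun n => by ring

theorem spiralS_add_tsum_mul_pow {ξ γ ρ S₀ S₁ : ℝ} (h₀ : HasSum (fun n => ‖a n‖) S₀)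
    (h₁ : HasSum (fun n : ℕ => ((n : ℝ) + 1) * ‖a n‖) S₁) (hcos : 0 < Real.cos ξ)
    (hρ₀ : 0 ≤ ρ) (hρ₁ : ρ ≤ 1) (hγ₀ : 0 ≤ γ) (hγ₁ : γ < 1)
    (hcoef : (1 - ρ) * S₁ + (1 - γ) * Real.cos ξ * (S₀ + ρ * S₁) ≤ (1 - γ) * Real.cos ξ) :
    SpiralS ξ γ ρ (fun z => z + ∑' n, a n * z ^ (n + 2)) := by
  have h₂ : HasSum (fun n : ℕ => ((n : ℝ) + 2) * ‖a n‖) (S₀ + S₁) := by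
    convert h₀.add h₁ using 1
    ext n
    ring
  have hderiv : ∀ z ∈ unitDisk, HasDerivAt (fun z => z + ∑' n, a n * z ^ (n + 2))
      (1 + ∑' n : ℕ, ((n : ℂ) + 2) * a n * z ^ (n + 1)) z := fun z hz =>
    (hasDerivAt_id z).add (hasDerivAt_tsum_mul_pow_add_two h₂.summable (mem_ball_zero_iff.mp hz))
  have hc : 0 < (1 - γ) * Real.cos ξ := mul_pos (by linarith) hcos
  have hsum : S₀ + S₁ ≤ 1 := by
    have hc₁ : (1 - γ) * Real.cos ξ ≤ 1 := by nlinarith [Real.cos_le_one ξ]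
    have hS₁ : 0 ≤ S₁ := h₁.nonneg fun n => by positivity
    nlinarith [mul_nonneg (sub_nonneg.mpr hρ₁) hS₁]
  refine ⟨⟨?_, by simp, by simpa using (hderiv 0 (Metric.mem_ball_self one_pos)).deriv⟩,
    injOn_add_tsum_mul_pow_add_two h₂ hsum, fun z hz hz₀ => ?_⟩
  · exact DifferentiableOn.analyticOn
      (fun z hz => (hderiv z hz).differentiableAt.differentiableWithinAt) Metric.isOpen_ball
  have hz' : ‖z‖ < 1 := mem_ball_zero_iff.mp hz
  rw [(hderiv z hz).deriv]
  set T := ∑' n, a n * z ^ (n + 2)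
  set T' := ∑' n : ℕ, ((n : ℂ) + 2) * a n * z ^ (n + 1)
  have hT : ‖T‖ ≤ S₀ * ‖z‖ ^ 2 := norm_tsum_mul_pow_add_le h₀ hz'.le 2
  have hT' : ‖z * T' - T‖ ≤ S₁ * ‖z‖ ^ 2 := by
    rw [mul_tsum_deriv_sub_tsum h₂.summable hz'.le]
    refine norm_tsum_mul_pow_add_le ?_ hz'.le 2
    convert h₁ using 2 with n
    rw [norm_mul]
    norm_cast
  set D := (1 - (ρ : ℂ)) * (z + T) + ρ * z * (1 + T')
  have hD : ‖D - z‖ ≤ (S₀ + ρ * S₁) * ‖z‖ ^ 2 := calc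
    ‖D - z‖ = ‖T + (ρ : ℂ) * (z * T' - T)‖ := by simp only [D]; ring_nf
    _ ≤ ‖T‖ + ‖(ρ : ℂ) * (z * T' - T)‖ := norm_add_le _ _
    _ = ‖T‖ + ρ * ‖z * T' - T‖ := by rw [norm_mul, Complex.norm_real, Real.norm_of_nonneg hρ₀]
    _ ≤ (S₀ + ρ * S₁) * ‖z‖ ^ 2 := by nlinarith
  have hN : ‖z * (1 + T') - D‖ ≤ ((1 - ρ) * S₁) * ‖z‖ ^ 2 := by
    rw [show z * (1 + T') - D = ((1 - ρ : ℝ) : ℂ) * (z * T' - T) by push_cast; ring, norm_mul,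
      Complex.norm_real, Real.norm_of_nonneg (sub_nonneg.mpr hρ₁), mul_assoc]
    exact mul_le_mul_of_nonneg_left hT' (sub_nonneg.mpr hρ₁)
  have key := norm_sub_lt_mul_norm_of_sq_bounds hz₀ hz' hc hD hN (by linarith)
  refine ⟨fun hD₀ => ?_, Complex.lt_re_exp_mul_div key⟩
  rw [hD₀, norm_zero, mul_zero] at key
  exact (norm_nonneg _).not_gt key

end SufficientCondition

def pascalCoeff (m : ℕ) (q : ℝ) (n : ℕ) : ℝ :=
  ((n + m).choose (m - 1) : ℝ) * q ^ (n + 1) * (1 - q) ^ m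

lemma pascalTheta_eq (m : ℕ) (q : ℝ) :
    pascalTheta m q = fun z => z + ∑' n, (pascalCoeff m q n : ℂ) * z ^ (n + 2) := by
  ext z
  simp [pascalTheta, pascalCoeff]

section PascalCoeff

variable {q : ℝ}

lemma pascalCoeff_nonneg (hq₀ : 0 ≤ q) (hq₁ : q ≤ 1) (m n : ℕ) : 0 ≤ pascalCoeff m q n := by
  have : 0 ≤ 1 - q := sub_nonneg.mpr hq₁
  unfold pascalCoeff
  positivity

lemma pascalCoeff_succ (m n : ℕ) :
    pascalCoeff (m + 1) q n = ((n + 1 + m).choose m : ℝ) * q ^ (n + 1) * (1 - q) ^ (m + 1) := by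
  rw [pascalCoeff, Nat.add_sub_cancel, show n + (m + 1) = n + 1 + m by omega]

lemma hasSum_pascalCoeff (m : ℕ) (hq : |q| < 1) :
    HasSum (pascalCoeff (m + 1) q) (1 - (1 - q) ^ (m + 1)) := by
  have hpos : (1 - q) ^ (m + 1) ≠ 0 := pow_ne_zero _ (by linarith [le_abs_self q])
  have hgeom := ((hasSum_nat_add_iff' 1).mpr
    (hasSum_choose_mul_geometric_of_norm_lt_one m (r := q) hq)).mul_right ((1 - q) ^ (m + 1))
  have hval : (1 / (1 - q) ^ (m + 1) - ∑ i ∈ Finset.range 1, ((i + m).choose m : ℝ) * q ^ i) *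
      (1 - q) ^ (m + 1) = 1 - (1 - q) ^ (m + 1) := by
    field_simp
    simp
  exact hval ▸ hgeom.congr_fun (pascalCoeff_succ m)

lemma hasSum_mul_pascalCoeff (m : ℕ) (hq : |q| < 1) :
    HasSum (fun n : ℕ => ((n : ℝ) + 1) * pascalCoeff (m + 1) q n) ((m + 1) * q / (1 - q)) := by
  have hpos : 1 - q ≠ 0 := by linarith [le_abs_self q]
  have hgeom := (hasSum_choose_mul_geometric_of_norm_lt_one (m + 1) (r := q) hq).mul_left
    ((m + 1) * q * (1 - q) ^ (m + 1))
  have hval : (m + 1) * q * (1 - q) ^ (m + 1) * (1 / (1 - q) ^ (m + 1 + 1)) =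
      (m + 1) * q / (1 - q) := by
    field_simp
    ring
  refine hval ▸ hgeom.congr_fun fun n => ?_
  have hchoose : (((n + 1 + m).choose m : ℕ) : ℝ) * (n + 1) =
      ((n + (m + 1)).choose (m + 1) : ℕ) * (m + 1) := by
    rw [show n + (m + 1) = n + 1 + m by omega]
    have := Nat.choose_succ_right_eq (n + 1 + m) m
    rw [Nat.add_sub_cancel] at this
    exact_mod_cast this.symm
  rw [pascalCoeff_succ]
  linear_combination (q ^ (n + 1) * (1 - q) ^ (m + 1)) * hchoose

end PascalCoeff

/-- Theorem 1, `Θ_q^m ∈ 𝒮(ξ, γ, ρ)`. -/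
theorem stmt5 (m : ℕ) (hm : 1 ≤ m) (q : ℝ) (hq0 : 0 < q) (hq1 : q < 1)
    (ξ ρ γ : ℝ) (hξ : |ξ| < π / 2) (hρ0 : 0 ≤ ρ) (hρ1 : ρ < 1)
    (hγ0 : 0 ≤ γ) (hγ1 : γ < 1)
    (h : ((1 - ρ) * (Real.cos ξ)⁻¹ + ρ * (1 - γ)) * (q * m / (1 - q) ^ (m + 1)) ≤ 1 - γ) :
    SpiralS ξ γ ρ (pascalTheta m q) := by
  obtain ⟨k, rfl⟩ : ∃ k, m = k + 1 := ⟨m - 1, by omega⟩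
  have hq : |q| < 1 := abs_lt.mpr ⟨by linarith, hq1⟩
  have hcos : 0 < Real.cos ξ := Real.cos_pos_of_mem_Ioo (abs_lt.mp hξ)
  have hnorm (n : ℕ) : ‖(pascalCoeff (k + 1) q n : ℂ)‖ = pascalCoeff (k + 1) q n := by
    rw [Complex.norm_real, Real.norm_of_nonneg (pascalCoeff_nonneg hq0.le hq1.le _ _)]
  rw [pascalTheta_eq]
  refine spiralS_add_tsum_mul_pow (by simpa only [hnorm] using hasSum_pascalCoeff k hq)
    (by simpa only [hnorm] using hasSum_mul_pascalCoeff k hq) hcos hρ0 hρ1.le hγ0 hγ1 ?_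
  have hq1' : 0 < 1 - q := sub_pos.mpr hq1
  have hP : 0 < Real.cos ξ * (1 - q) ^ (k + 1) := mul_pos hcos (pow_pos hq1' _)
  have hscaled := mul_le_mul_of_nonneg_right h hP.le
  rw [show ((1 - ρ) * (Real.cos ξ)⁻¹ + ρ * (1 - γ)) * (q * ↑(k + 1) / (1 - q) ^ (k + 1 + 1)) *
      (Real.cos ξ * (1 - q) ^ (k + 1)) =
        ((1 - ρ) + (1 - γ) * Real.cos ξ * ρ) * ((k + 1) * q / (1 - q)) by
    field_simp [hcos.ne', hq1'.ne']
    push_cast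
    ring] at hscaled
  linarith
end
end
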